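/- Let b ≥ 1, let n_1, …, n_b be positive reals with cumulative sums N_j = Σ_{i=1}^j n_i, let p ≥ 2 (so log p > 0), and let K ≥ 0, c ≥ 0. For each j = 1, …, b let X^{(j)} be an n_j×q real matrix and v_j ∈ ℝ^q such that ‖v_j‖₁ ≤ K √(log p / N_j) and every entry of (1/n_j)(X^{(j)})ᵀ X^{(j)} has absolute value at most c. Then Σ_{j=1}^b ‖X^{(j)} v_j‖₂² ≤ c K² (log p) (1 + log(N_b / n_1)). -/
import Mathlib

open Finset Matrix

/-- Quadratic form bound via entrywise bound on `XᵀX`. -/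
lemma qf_bound {m q : ℕ} (X : Matrix (Fin m) (Fin q) ℝ) (v : Fin q → ℝ)
    (C : ℝ) (hC : ∀ a a' : Fin q, |(Xᵀ * X) a a'| ≤ C) :
    ∑ i, (X.mulVec v i) ^ 2 ≤ C * (∑ k, |v k|) ^ 2 := by
  have key : ∑ i, (X.mulVec v i) ^ 2
      = ∑ a, ∑ a', v a * v a' * (Xᵀ * X) a a' := by
    simp only [Matrix.mulVec, dotProduct, sq, Finset.sum_mul_sum,
      Matrix.mul_apply, Matrix.transpose_apply, Finset.mul_sum]
    rw [Finset.sum_comm]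
    refine Finset.sum_congr rfl fun a _ => ?_
    rw [Finset.sum_comm]
    refine Finset.sum_congr rfl fun a' _ => ?_
    rw [Finset.sum_mul]
    refine Finset.sum_congr rfl fun i _ => by ring
  rw [key]
  have h2 : ∑ a, ∑ a', v a * v a' * (Xᵀ * X) a a'
      ≤ ∑ a, ∑ a', |v a| * |v a'| * C := by
    refine Finset.sum_le_sum fun a _ => Finset.sum_le_sum fun a' _ => ?_
    calc v a * v a' * (Xᵀ * X) a a' ≤ |v a * v a' * (Xᵀ * X) a a'| := le_abs_self _
      _ = |v a| * |v a'| * |(Xᵀ * X) a a'| := by rw [abs_mul, abs_mul]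
      _ ≤ |v a| * |v a'| * C := by
          exact mul_le_mul_of_nonneg_left (hC a a') (by positivity)
  refine h2.trans_eq ?_
  rw [sq, Finset.sum_mul_sum]
  rw [Finset.mul_sum]
  refine Finset.sum_congr rfl fun a _ => ?_
  rw [Finset.mul_sum]
  refine Finset.sum_congr rfl fun a' _ => by ring

/-- Telescoping log bound: `∑_{j<b} n_j / N_j ≤ 1 + log (N_b / n_0)`. -/
lemma sum_ratio_le (n : ℕ → ℕ) : ∀ b : ℕ, 1 ≤ b → (∀ j < b, 0 < n j) →
    ∑ j ∈ Finset.range b, (n j : ℝ) / (∑ i ∈ Finset.range (j + 1), (n i : ℝ))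
      ≤ 1 + Real.log ((∑ i ∈ Finset.range b, (n i : ℝ)) / (n 0 : ℝ)) := by
  intro b
  induction b with
  | zero => omega
  | succ b ih =>
    intro _ hn
    rcases Nat.eq_zero_or_pos b with hb0 | hb0
    · subst hb0
      have h0 : (0:ℝ) < n 0 := by exact_mod_cast hn 0 (by omega)
      simp [Finset.sum_range_one, div_self h0.ne', Real.log_one]
    · have hn' : ∀ j < b, 0 < n j := fun j hj => hn j (by omega)
      have hprev := ih hb0 hn'
      have hNpos : ∀ m, 0 < m → (0:ℝ) < ∑ i ∈ Finset.range m, (n i : ℝ) := by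
        intro m hm
        refine Finset.sum_pos' (fun i _ => by positivity) ?_
        exact ⟨0, Finset.mem_range.mpr hm, by exact_mod_cast hn 0 (by omega)⟩
      set Np : ℝ := ∑ i ∈ Finset.range b, (n i : ℝ) with hNp
      set Nc : ℝ := ∑ i ∈ Finset.range (b+1), (n i : ℝ) with hNc
      have hNppos : 0 < Np := hNpos b hb0
      have hNcpos : 0 < Nc := hNpos (b+1) (by omega)
      have hstep : (n b : ℝ) / Nc ≤ Real.log Nc - Real.log Np := by
        have hlog : Real.log (Np / Nc) ≤ Np / Nc - 1 :=
          Real.log_le_sub_one_of_pos (by positivity)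
        have hrel : Nc = Np + n b := by
          rw [hNc, Finset.sum_range_succ]
        rw [Real.log_div hNppos.ne' hNcpos.ne'] at hlog
        have : Np / Nc - 1 = -((n b : ℝ) / Nc) := by
          field_simp
          linarith [hrel]
        rw [this] at hlog
        linarith
      rw [Finset.sum_range_succ]
      have h0 : (0:ℝ) < n 0 := by exact_mod_cast hn 0 (by omega)
      have hlogc : Real.log (Nc / n 0) = Real.log Nc - Real.log (n 0) :=
        Real.log_div hNcpos.ne' h0.ne'
      have hlogp : Real.log (Np / n 0) = Real.log Np - Real.log (n 0) :=
        Real.log_div hNppos.ne' h0.ne'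
      calc (∑ j ∈ Finset.range b, (n j : ℝ) / (∑ i ∈ Finset.range (j + 1), (n i : ℝ)))
            + (n b : ℝ) / Nc
          ≤ (1 + Real.log (Np / n 0)) + (Real.log Nc - Real.log Np) :=
            add_le_add hprev hstep
        _ = 1 + Real.log (Nc / n 0) := by rw [hlogc, hlogp]; ring

open Finset Matrix in
/-- Deterministic core of Lemma A.2: if `‖v_j‖₁ ≤ K√(log p / N_j)` and the
entries of `(1/n_j)(X⁽ʲ⁾)ᵀX⁽ʲ⁾` are bounded by `c`, then
`Σ_j ‖X⁽ʲ⁾ v_j‖₂² ≤ c K² (log p)(1 + log(N_b / n_1))`. -/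
theorem cumulative_projection_error_bound (b q : ℕ) (hb : 1 ≤ b)
    (p : ℕ) (hp : 2 ≤ p) (K c : ℝ) (hK : 0 ≤ K) (hc : 0 ≤ c)
    (n : ℕ → ℕ) (hn : ∀ j < b, 0 < n j)
    (X : ∀ j : ℕ, Matrix (Fin (n j)) (Fin q) ℝ) (v : ℕ → Fin q → ℝ)
    (hv : ∀ j < b, (∑ k, |v j k|) ≤
      K * Real.sqrt (Real.log p / ∑ i ∈ Finset.range (j + 1), (n i : ℝ)))
    (hX : ∀ j < b, ∀ a a' : Fin q,
      |(1 / (n j : ℝ)) * (((X j)ᵀ * X j) a a')| ≤ c) :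
    ∑ j ∈ Finset.range b, ∑ i, ((X j).mulVec (v j) i) ^ 2 ≤
      c * K ^ 2 * Real.log p *
        (1 + Real.log ((∑ i ∈ Finset.range b, (n i : ℝ)) / (n 0 : ℝ))) := by
  have hlogp : 0 < Real.log p :=
    Real.log_pos (by exact_mod_cast Nat.one_lt_cast.mpr (by omega))
  have hNpos : ∀ j < b, (0:ℝ) < ∑ i ∈ Finset.range (j+1), (n i : ℝ) := by
    intro j hj
    refine Finset.sum_pos' (fun i _ => by positivity) ?_
    exact ⟨0, Finset.mem_range.mpr (by omega), by exact_mod_cast hn 0 (by omega)⟩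
  -- per-batch bound
  have hper : ∀ j < b, ∑ i, ((X j).mulVec (v j) i) ^ 2 ≤
      c * K ^ 2 * Real.log p *
        ((n j : ℝ) / ∑ i ∈ Finset.range (j+1), (n i : ℝ)) := by
    intro j hj
    have hnj : (0:ℝ) < n j := by exact_mod_cast hn j hj
    have hNj := hNpos j hj
    have hent : ∀ a a', |((X j)ᵀ * X j) a a'| ≤ (n j : ℝ) * c := by
      intro a a'
      have := hX j hj a a'
      rw [abs_mul, abs_of_pos (by positivity : (0:ℝ) < 1 / (n j : ℝ))] at this
      calc |((X j)ᵀ * X j) a a'|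
          = (n j : ℝ) * (1 / (n j : ℝ) * |((X j)ᵀ * X j) a a'|) := by
            field_simp
        _ ≤ (n j : ℝ) * c := mul_le_mul_of_nonneg_left this hnj.le
    have h1 := qf_bound (X j) (v j) ((n j : ℝ) * c) hent
    have hv1 : (∑ k, |v j k|) ^ 2 ≤
        K ^ 2 * (Real.log p / ∑ i ∈ Finset.range (j+1), (n i : ℝ)) := by
      have hvnn : 0 ≤ ∑ k, |v j k| := Finset.sum_nonneg fun k _ => abs_nonneg _
      have := pow_le_pow_left₀ hvnn (hv j hj) 2
      rwa [mul_pow, Real.sq_sqrt (by positivity)] at this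
    calc ∑ i, ((X j).mulVec (v j) i) ^ 2
        ≤ (n j : ℝ) * c * ((∑ k, |v j k|) ^ 2) := h1
      _ ≤ (n j : ℝ) * c * (K ^ 2 * (Real.log p / ∑ i ∈ Finset.range (j+1), (n i : ℝ))) :=
          mul_le_mul_of_nonneg_left hv1 (by positivity)
      _ = c * K ^ 2 * Real.log p * ((n j : ℝ) / ∑ i ∈ Finset.range (j+1), (n i : ℝ)) := by
          field_simp
  calc ∑ j ∈ Finset.range b, ∑ i, ((X j).mulVec (v j) i) ^ 2
      ≤ ∑ j ∈ Finset.range b, c * K ^ 2 * Real.log p *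
          ((n j : ℝ) / ∑ i ∈ Finset.range (j+1), (n i : ℝ)) :=
        Finset.sum_le_sum fun j hj => hper j (Finset.mem_range.mp hj)
    _ = c * K ^ 2 * Real.log p *
          ∑ j ∈ Finset.range b, (n j : ℝ) / (∑ i ∈ Finset.range (j+1), (n i : ℝ)) := by
        rw [Finset.mul_sum]
    _ ≤ c * K ^ 2 * Real.log p *
          (1 + Real.log ((∑ i ∈ Finset.range b, (n i : ℝ)) / (n 0 : ℝ))) := by
        refine mul_le_mul_of_nonneg_left (sum_ratio_le n b hb hn) (by positivity)
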